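/- Let (f_ε)_{ε>0} be a family of functions f_ε:ℝⁿ→ℝⁿ, each globally Lipschitz continuous with the same constant L>0, such that f_ε(z)→f(z) as ε↓0 for every z∈ℝⁿ. For (a_ε,ℓ_ε),(a,ℓ)∈L^∞(0,T;ℝ^{n×n})×L^∞(0,T;ℝⁿ) with (a_ε,ℓ_ε)→(a,ℓ) in L^∞(0,T;ℝ^{n×n}×ℝⁿ) as ε↓0, let y_ε∈C([0,T];ℝⁿ) be the unique solution of y_ε(t)=y₀+∫₀ᵗ ((t−s)^{γ−1}/Γ(γ)) f_ε(a_ε(s)y_ε(s)+ℓ_ε(s)) ds, t∈[0,T], and let y=S(a,ℓ). Then ‖y_ε−y‖_{C([0,T];ℝⁿ)}→0 as ε↓0. -/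

import Mathlib

open MeasureTheory Set Filter Topology

noncomputable section

/-- `ℝⁿ` with the Euclidean norm. -/
abbrev Vec (n : ℕ) := EuclideanSpace ℝ (Fin n)

/-- `ℝ^{n×n}` with the Frobenius (Euclidean) norm. -/
abbrev Mat (n : ℕ) := EuclideanSpace ℝ ((Fin n) × (Fin n))

/-- Matrix-vector multiplication `A * x`. -/
def mv {n : ℕ} (A : Mat n) (x : Vec n) : Vec n :=
  (WithLp.equiv 2 (Fin n → ℝ)).symm (fun i => ∑ j, A (i, j) * x j)

/-- `y ∈ C([0,T];ℝⁿ)` is a mild solution of the state equation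
`∂^γ y = f(a y + ℓ)`, `y(0) = y₀`, i.e. it satisfies the Volterra integral equation
`y(t) = y₀ + ∫₀ᵗ ((t-s)^(γ-1)/Γ(γ)) f(a(s) y(s) + ℓ(s)) ds` for all `t ∈ [0,T]`. -/
def IsMildSolution {n : ℕ} (γ T : ℝ) (y₀ : Vec n) (f : Vec n → Vec n)
    (a : ℝ → Mat n) (ℓ : ℝ → Vec n) (y : ℝ → Vec n) : Prop :=
  ContinuousOn y (Icc 0 T) ∧
  ∀ t ∈ Icc (0:ℝ) T,
    y t = y₀ + ∫ s in (0:ℝ)..t, ((t - s) ^ (γ - 1) / Real.Gamma γ) • f (mv (a s) (y s) + ℓ s)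


/-!
The equi-Lipschitz family `f_ε` converges to `f` uniformly on compact sets, in particular on a
ball containing every argument `a(s) y(s) + ℓ(s)`, `s ∈ [0,T]`. Subtracting the two Volterra
equations gives, for `w = ‖y_ε - y‖`, an inequality `w t ≤ A_ε + c ∫₀ᵗ (t-s)^(γ-1) w s ds` with
`c` independent of `ε` and `A_ε → 0`. For this weakly singular kernel Gronwall's lemma is proved by
maximising `e^{-λt} w t` on `[0,T]`: with `λ^γ = 2 c Γ(γ)` one has
`c ∫₀^∞ u^(γ-1) e^{-λu} du = 1/2`, whence `w ≤ 2 A_ε e^{λT}`.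
-/

open intervalIntegral

section MatVec

variable {n : ℕ}

lemma mv_sub_mv (A B : Mat n) (x z : Vec n) :
    mv A x - mv B z = mv A (x - z) + mv (A - B) z := by
  ext i
  simp only [mv, WithLp.equiv_symm_apply, PiLp.add_apply, PiLp.sub_apply]
  rw [← Finset.sum_add_distrib, ← Finset.sum_sub_distrib]
  congr 1; ext j; ring

lemma norm_mv_le (A : Mat n) (x : Vec n) : ‖mv A x‖ ≤ ‖A‖ * ‖x‖ := by
  rw [← Real.sqrt_sq (by positivity : 0 ≤ ‖A‖ * ‖x‖), EuclideanSpace.norm_eq]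
  apply Real.sqrt_le_sqrt
  have row : ∀ i, ‖mv A x i‖ ^ 2 ≤ (∑ j, A (i, j) ^ 2) * ∑ j, x j ^ 2 := fun i => by
    simpa [mv, WithLp.equiv, Real.norm_eq_abs, sq_abs] using
      Finset.sum_mul_sq_le_sq_mul_sq Finset.univ (fun j => A (i, j)) (fun j => x j)
  calc ∑ i, ‖mv A x i‖ ^ 2 ≤ ∑ i, (∑ j, A (i, j) ^ 2) * ∑ j, x j ^ 2 :=
        Finset.sum_le_sum fun i _ => row i
    _ = (‖A‖ * ‖x‖) ^ 2 := by
        rw [← Finset.sum_mul, mul_pow, EuclideanSpace.norm_eq, EuclideanSpace.norm_eq,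
          Real.sq_sqrt (by positivity), Real.sq_sqrt (by positivity), ← Fintype.sum_prod_type']
        simp only [Real.norm_eq_abs, sq_abs]

lemma continuous_mv : Continuous fun p : Mat n × Vec n => mv p.1 p.2 :=
  (PiLp.continuous_toLp 2 _).comp <| continuous_pi fun i => continuous_finsetSum _ fun j _ =>
    ((EuclideanSpace.proj (𝕜 := ℝ) (i, j)).continuous.comp continuous_fst).mul
      ((EuclideanSpace.proj (𝕜 := ℝ) j).continuous.comp continuous_snd)

lemma norm_mv_add_le {A : Mat n} {x v : Vec n} {C K : ℝ} (hA : ‖A‖ ≤ C) (hx : ‖x‖ ≤ K)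
    (hv : ‖v‖ ≤ C) : ‖mv A x + v‖ ≤ C * K + C :=
  calc ‖mv A x + v‖ ≤ ‖A‖ * ‖x‖ + ‖v‖ := (norm_add_le _ _).trans (by gcongr; exact norm_mv_le _ _)
    _ ≤ C * K + C := by gcongr; exact (norm_nonneg _).trans hA

lemma norm_mv_add_sub_mv_add_le (A B : Mat n) (x z v w : Vec n) :
    ‖(mv A x + v) - (mv B z + w)‖ ≤ ‖A‖ * ‖x - z‖ + ‖A - B‖ * ‖z‖ + ‖v - w‖ := by
  rw [add_sub_add_comm, mv_sub_mv]
  refine (norm_add_le _ _).trans (add_le_add ((norm_add_le _ _).trans ?_) le_rfl)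
  exact add_le_add (norm_mv_le _ _) (norm_mv_le _ _)

end MatVec

theorem tendstoLocallyUniformly_of_lipschitzWith {ι α β : Type*} [PseudoMetricSpace α]
    [PseudoMetricSpace β] {p : Filter ι} {F : ι → α → β} {f : α → β} {K : NNReal}
    (hF : ∀ᶠ i in p, LipschitzWith K (F i)) (hf : LipschitzWith K f)
    (h : ∀ x, Tendsto (fun i => F i x) p (𝓝 (f x))) : TendstoLocallyUniformly F f p := by
  refine Metric.tendstoLocallyUniformly_iff.2 fun ε hε x => ?_
  have hr : 0 < ε / (3 * (K + 1)) := by positivity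
  have hKr : K * (ε / (3 * (K + 1))) ≤ ε / 3 := by
    rw [mul_div_assoc', div_le_div_iff₀ (by positivity) (by positivity)]
    nlinarith [K.coe_nonneg]
  refine ⟨Metric.ball x (ε / (3 * (K + 1))), Metric.ball_mem_nhds x hr, ?_⟩
  filter_upwards [hF, Metric.tendsto_nhds.1 (h x) (ε / 3) (by positivity)] with i hFi hix y hy
  have hy' : K * dist y x ≤ ε / 3 := (mul_le_mul_of_nonneg_left (Metric.mem_ball.1 hy).le
    K.coe_nonneg).trans hKr
  have hfy : dist (f y) (f x) ≤ ε / 3 := (hf.dist_le_mul y x).trans hy'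
  have hFy : dist (F i x) (F i y) ≤ ε / 3 := (hFi.dist_le_mul x y).trans (dist_comm x y ▸ hy')
  calc dist (f y) (F i y) ≤ dist (f y) (f x) + dist (f x) (F i x) + dist (F i x) (F i y) :=
        dist_triangle4 _ _ _ _
    _ < ε := by rw [dist_comm (f x)]; linarith

lemma integral_rpow_mul_exp_neg_mul_le {γ lam t : ℝ} (hγ : 0 < γ) (hlam : 0 < lam)
    (ht : 0 ≤ t) :
    ∫ u in (0:ℝ)..t, u ^ (γ - 1) * Real.exp (-(lam * u)) ≤ (1 / lam) ^ γ * Real.Gamma γ := by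
  have hI := Real.integral_rpow_mul_exp_neg_mul_Ioi hγ hlam
  rw [integral_of_le ht, ← hI]
  -- the integral over `Ioi 0` is nonzero, hence the integrand is integrable there
  refine setIntegral_mono_set (Integrable.of_integral_ne_zero (by rw [hI]; positivity)) ?_
    Ioc_subset_Ioi_self.eventuallyLE
  filter_upwards [self_mem_ae_restrict measurableSet_Ioi] with u hu
  exact mul_nonneg (Real.rpow_nonneg hu.le _) (Real.exp_pos _).le

lemma intervalIntegrable_sub_rpow {r : ℝ} (hr : -1 < r) (t : ℝ) :
    IntervalIntegrable (fun s => (t - s) ^ r) volume 0 t := by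
  simpa using ((intervalIntegrable_rpow' (a := 0) (b := t) hr).comp_sub_left t).symm

lemma intervalIntegrable_sub_rpow_mul {r t : ℝ} (hr : -1 < r) (ht : 0 ≤ t) {w : ℝ → ℝ}
    (hw : ContinuousOn w (Icc 0 t)) :
    IntervalIntegrable (fun s => (t - s) ^ r * w s) volume 0 t :=
  (intervalIntegrable_sub_rpow hr t).mul_continuousOn (by rwa [uIcc_of_le ht])

lemma integral_sub_rpow {r : ℝ} (hr : -1 < r) (t : ℝ) :
    ∫ s in (0:ℝ)..t, (t - s) ^ r = t ^ (r + 1) / (r + 1) := by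
  rw [integral_comp_sub_left (fun u => u ^ r) t]
  simp [integral_rpow (Or.inl hr), Real.zero_rpow (by linarith : r + 1 ≠ 0)]

lemma integral_sub_rpow_mul_add {γ t c β : ℝ} (hγ : 0 < γ) (ht : 0 ≤ t) {w : ℝ → ℝ}
    (hw : ContinuousOn w (Icc 0 t)) :
    ∫ s in (0:ℝ)..t, (t - s) ^ (γ - 1) * (c * w s + β)
      = c * (∫ s in (0:ℝ)..t, (t - s) ^ (γ - 1) * w s) + β * (t ^ γ / γ) := by
  have hr : -1 < γ - 1 := by linarith
  have h := integral_add ((intervalIntegrable_sub_rpow_mul hr ht hw).const_mul c)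
    ((intervalIntegrable_sub_rpow hr t).const_mul β)
  rw [intervalIntegral.integral_const_mul, intervalIntegral.integral_const_mul,
    integral_sub_rpow hr, sub_add_cancel] at h
  rw [← h]
  congr 1 with s
  ring

lemma integral_sub_rpow_mul_le_of_le_exp {γ lam t M : ℝ} (hγ : 0 < γ) (hlam : 0 < lam)
    (ht : 0 ≤ t) (hM0 : 0 ≤ M) {w : ℝ → ℝ} (hw : ContinuousOn w (Icc 0 t))
    (hM : ∀ s ∈ Icc 0 t, w s ≤ M * Real.exp (lam * s)) :
    ∫ s in (0:ℝ)..t, (t - s) ^ (γ - 1) * w s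
      ≤ M * Real.exp (lam * t) * ((1 / lam) ^ γ * Real.Gamma γ) := by
  have hr : -1 < γ - 1 := by linarith
  calc ∫ s in (0:ℝ)..t, (t - s) ^ (γ - 1) * w s
      ≤ ∫ s in (0:ℝ)..t, (t - s) ^ (γ - 1) * (M * Real.exp (lam * s)) := by
        refine integral_mono_on ht (intervalIntegrable_sub_rpow_mul hr ht hw)
          (intervalIntegrable_sub_rpow_mul hr ht (by fun_prop)) fun s hs => ?_
        exact mul_le_mul_of_nonneg_left (hM s hs) (Real.rpow_nonneg (by linarith [hs.2]) _)
    _ = M * Real.exp (lam * t) * ∫ u in (0:ℝ)..t, u ^ (γ - 1) * Real.exp (-(lam * u)) := by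
        have hsubst := integral_comp_sub_left (a := 0) (b := t)
          (fun u => M * Real.exp (lam * t) * (u ^ (γ - 1) * Real.exp (-(lam * u)))) t
        rw [sub_self, sub_zero] at hsubst
        rw [← intervalIntegral.integral_const_mul, ← hsubst]
        congr 1 with s
        rw [show lam * s = lam * t + -(lam * (t - s)) by ring, Real.exp_add]
        ring
    _ ≤ M * Real.exp (lam * t) * ((1 / lam) ^ γ * Real.Gamma γ) := by
        gcongr
        exact integral_rpow_mul_exp_neg_mul_le hγ hlam ht

theorem le_two_mul_exp_of_le_add_integral {γ T c A lam : ℝ} (hγ : 0 < γ) (hc : 0 ≤ c)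
    (hlam : 0 < lam) (hclam : 2 * c * Real.Gamma γ ≤ lam ^ γ) {w : ℝ → ℝ}
    (hw : ContinuousOn w (Icc 0 T)) (hw0 : ∀ t ∈ Icc 0 T, 0 ≤ w t)
    (h : ∀ t ∈ Icc 0 T, w t ≤ A + c * ∫ s in (0:ℝ)..t, (t - s) ^ (γ - 1) * w s) :
    ∀ t ∈ Icc 0 T, w t ≤ 2 * A * Real.exp (lam * T) := by
  intro t ht
  obtain ⟨t₀, ht₀, hmax⟩ := isCompact_Icc.exists_isMaxOn ⟨t, ht⟩
    ((Continuous.continuousOn (by fun_prop : Continuous fun s => Real.exp (-(lam * s)))).mul hw)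
  set M := Real.exp (-(lam * t₀)) * w t₀
  have hM0 : 0 ≤ M := mul_nonneg (Real.exp_pos _).le (hw0 t₀ ht₀)
  have hM : ∀ s ∈ Icc 0 T, w s ≤ M * Real.exp (lam * s) := fun s hs => by
    have : Real.exp (-(lam * s)) * w s ≤ M := hmax hs
    rwa [Real.exp_neg, inv_mul_le_iff₀ (Real.exp_pos _), mul_comm] at this
  have hhalf : c * ((1 / lam) ^ γ * Real.Gamma γ) ≤ 1 / 2 := by
    rw [Real.div_rpow zero_le_one hlam.le, Real.one_rpow, one_div_mul_eq_div, mul_div_assoc',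
      div_le_div_iff₀ (by positivity) two_pos]
    linarith
  have hIcc : Icc 0 t₀ ⊆ Icc 0 T := Icc_subset_Icc le_rfl ht₀.2
  have hwt₀ : w t₀ ≤ A + M * Real.exp (lam * t₀) / 2 := calc
    w t₀ ≤ A + c * ∫ s in (0:ℝ)..t₀, (t₀ - s) ^ (γ - 1) * w s := h t₀ ht₀
    _ ≤ A + c * (M * Real.exp (lam * t₀) * ((1 / lam) ^ γ * Real.Gamma γ)) := by
        gcongr
        exact integral_sub_rpow_mul_le_of_le_exp hγ hlam ht₀.1 hM0 (hw.mono hIcc)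
          fun s hs => hM s (hIcc hs)
    _ ≤ A + M * Real.exp (lam * t₀) / 2 := by
        nlinarith [mul_nonneg hM0 (Real.exp_pos (lam * t₀)).le]
  have hM2A : M ≤ 2 * A := by
    have hexp : Real.exp (-(lam * t₀)) ≤ 1 :=
      Real.exp_le_one_iff.2 (neg_nonpos.2 (mul_nonneg hlam.le ht₀.1))
    have : M ≤ Real.exp (-(lam * t₀)) * A + M / 2 := by
      calc M ≤ Real.exp (-(lam * t₀)) * (A + M * Real.exp (lam * t₀) / 2) :=
            mul_le_mul_of_nonneg_left hwt₀ (Real.exp_pos _).le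
        _ = Real.exp (-(lam * t₀)) * A + M / 2 := by
            rw [mul_add, ← mul_div_assoc, mul_left_comm, ← Real.exp_add, neg_add_cancel,
              Real.exp_zero, mul_one]
    nlinarith [Real.exp_pos (-(lam * t₀))]
  calc w t ≤ M * Real.exp (lam * t) := hM t ht
    _ ≤ M * Real.exp (lam * T) := by gcongr; exact ht.2
    _ ≤ 2 * A * Real.exp (lam * T) := by gcongr

lemma intervalIntegrable_sub_rpow_div_smul {E : Type*} [NormedAddCommGroup E] [NormedSpace ℝ E]
    {r t K B : ℝ} (hr : -1 < r) (ht : 0 ≤ t) {F : ℝ → E}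
    (hF : AEStronglyMeasurable F (volume.restrict (Ioc 0 t))) (hB : ∀ s ∈ Ioc 0 t, ‖F s‖ ≤ B) :
    IntervalIntegrable (fun s => ((t - s) ^ r / K) • F s) volume 0 t := by
  rw [intervalIntegrable_iff_integrableOn_Ioc_of_le ht]
  have hk := (intervalIntegrable_iff_integrableOn_Ioc_of_le ht).1
    ((intervalIntegrable_sub_rpow hr t).div_const K)
  exact hk.smul_bdd B hF (ae_restrict_of_forall_mem measurableSet_Ioc hB)

lemma norm_integral_sub_rpow_div_smul_sub_le {E : Type*} [NormedAddCommGroup E]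
    [NormedSpace ℝ E] {r t K : ℝ} (hr : -1 < r) (ht : 0 ≤ t) (hK : 0 < K) {F G : ℝ → E}
    (hF : IntervalIntegrable (fun s => ((t - s) ^ r / K) • F s) volume 0 t)
    (hG : IntervalIntegrable (fun s => ((t - s) ^ r / K) • G s) volume 0 t) {φ : ℝ → ℝ}
    (hφ : ContinuousOn φ (Icc 0 t)) (h : ∀ s ∈ Ioc 0 t, ‖F s - G s‖ ≤ φ s) :
    ‖(∫ s in (0:ℝ)..t, ((t - s) ^ r / K) • F s) - ∫ s in (0:ℝ)..t, ((t - s) ^ r / K) • G s‖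
      ≤ (∫ s in (0:ℝ)..t, (t - s) ^ r * φ s) / K := by
  rw [← integral_sub hF hG, ← intervalIntegral.integral_div]
  refine norm_integral_le_of_norm_le ht (ae_of_all _ fun s hs => ?_)
    ((intervalIntegrable_sub_rpow_mul hr ht hφ).div_const K)
  have hk : 0 ≤ (t - s) ^ r := Real.rpow_nonneg (by linarith [hs.2]) _
  rw [← smul_sub, norm_smul, Real.norm_of_nonneg (div_nonneg hk hK.le), div_mul_eq_mul_div]
  gcongr
  exact h s hs

section MildSolution

variable {n : ℕ} {γ T C : ℝ} {y₀ : Vec n} {f g : Vec n → Vec n} {a b : ℝ → Mat n}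
  {ℓ m : ℝ → Vec n} {y Y : ℝ → Vec n}

lemma intervalIntegrable_mild_integrand (hγ : 0 < γ) (hf : Continuous f) (ha : Measurable a)
    (hℓ : Measurable ℓ) (hy : ContinuousOn y (Icc 0 T))
    (hC : ∀ s ∈ Icc 0 T, ‖a s‖ ≤ C ∧ ‖ℓ s‖ ≤ C) {t : ℝ} (ht : t ∈ Icc 0 T) :
    IntervalIntegrable (fun s => ((t - s) ^ (γ - 1) / Real.Gamma γ) • f (mv (a s) (y s) + ℓ s))
      volume 0 t := by
  obtain ⟨Ky, hKy⟩ := isCompact_Icc.exists_bound_of_continuousOn hy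
  obtain ⟨B, hB⟩ := (isCompact_closedBall (0 : Vec n) (C * Ky + C)).exists_bound_of_continuousOn
    hf.continuousOn
  have hsub : Ioc 0 t ⊆ Icc 0 T := fun s hs => ⟨hs.1.le, hs.2.trans ht.2⟩
  have hym : AEStronglyMeasurable y (volume.restrict (Ioc 0 t)) :=
    (hy.aestronglyMeasurable measurableSet_Icc).mono_measure (Measure.restrict_mono hsub le_rfl)
  refine intervalIntegrable_sub_rpow_div_smul (by linarith) ht.1
    (hf.comp_aestronglyMeasurable ((continuous_mv.comp_aestronglyMeasurable
      (ha.aestronglyMeasurable.prodMk hym)).add hℓ.aestronglyMeasurable))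
    fun s hs => hB _ (mem_closedBall_zero_iff.2 ?_)
  obtain ⟨has, hℓs⟩ := hC s (hsub hs)
  exact norm_mv_add_le has (hKy s (hsub hs)) hℓs

lemma norm_comp_mv_add_sub_le {K : NNReal} (hg : LipschitzWith K g) (A B : Mat n)
    (x z v w : Vec n) :
    ‖g (mv A x + v) - f (mv B z + w)‖
      ≤ K * (‖A‖ * ‖x - z‖ + ‖A - B‖ * ‖z‖ + ‖v - w‖) + ‖g (mv B z + w) - f (mv B z + w)‖ :=
  (norm_sub_le_norm_sub_add_norm_sub _ (g (mv B z + w)) _).trans <| add_le_add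
    ((hg.norm_sub_le _ _).trans (by gcongr; exact norm_mv_add_sub_mv_add_le _ _ _ _ _ _)) le_rfl

theorem IsMildSolution.norm_sub_le_add_integral {K : NNReal} {Ky d η : ℝ} (hγ : 0 < γ)
    (hy : IsMildSolution γ T y₀ f a ℓ y) (hY : IsMildSolution γ T y₀ g b m Y)
    (hf : Continuous f) (hg : LipschitzWith K g)
    (ha : Measurable a) (hℓ : Measurable ℓ) (hb : Measurable b) (hm : Measurable m)
    (hC : ∀ s ∈ Icc 0 T, ‖a s‖ ≤ C ∧ ‖ℓ s‖ ≤ C) (hKy : ∀ s ∈ Icc 0 T, ‖y s‖ ≤ Ky)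
    (hd1 : d ≤ 1) (hd : ∀ s ∈ Icc 0 T, ‖b s - a s‖ ≤ d ∧ ‖m s - ℓ s‖ ≤ d)
    (hη : ∀ z ∈ Metric.closedBall 0 (C * Ky + C), ‖g z - f z‖ ≤ η) {t : ℝ} (ht : t ∈ Icc 0 T) :
    ‖Y t - y t‖ ≤ (η + K * d * (Ky + 1)) * T ^ γ / Real.Gamma (γ + 1)
      + K * (C + 1) / Real.Gamma γ * ∫ s in (0:ℝ)..t, (t - s) ^ (γ - 1) * ‖Y s - y s‖ := by
  have hr : -1 < γ - 1 := by linarith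
  have hsub : Icc 0 t ⊆ Icc 0 T := Icc_subset_Icc le_rfl ht.2
  have hZ : ∀ s ∈ Icc 0 T, mv (a s) (y s) + ℓ s ∈ Metric.closedBall 0 (C * Ky + C) :=
    fun s hs => mem_closedBall_zero_iff.2 (norm_mv_add_le (hC s hs).1 (hKy s hs) (hC s hs).2)
  have hbm : ∀ s ∈ Icc 0 T, ‖b s‖ ≤ C + 1 ∧ ‖m s‖ ≤ C + 1 := fun s hs =>
    ⟨(norm_le_norm_add_norm_sub' _ _).trans (add_le_add (hC s hs).1 ((hd s hs).1.trans hd1)),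
      (norm_le_norm_add_norm_sub' _ _).trans (add_le_add (hC s hs).2 ((hd s hs).2.trans hd1))⟩
  have hd0 : 0 ≤ d := (norm_nonneg _).trans (hd t ht).1
  set β := η + K * d * (Ky + 1)
  have hβ : 0 ≤ β := by
    have hη0 : 0 ≤ η := (norm_nonneg _).trans (hη _ (hZ t ht))
    have hKy0 : 0 ≤ Ky := (norm_nonneg _).trans (hKy t ht)
    positivity
  have hpt : ∀ s ∈ Icc 0 T, ‖g (mv (b s) (Y s) + m s) - f (mv (a s) (y s) + ℓ s)‖
      ≤ K * (C + 1) * ‖Y s - y s‖ + β := fun s hs => calc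
    _ ≤ K * (‖b s‖ * ‖Y s - y s‖ + ‖b s - a s‖ * ‖y s‖ + ‖m s - ℓ s‖) + η :=
        (norm_comp_mv_add_sub_le hg _ _ _ _ _ _).trans (add_le_add le_rfl (hη _ (hZ s hs)))
    _ ≤ K * ((C + 1) * ‖Y s - y s‖ + d * Ky + d) + η := by
        gcongr
        exacts [(hbm s hs).1, (hd s hs).1, hKy s hs, (hd s hs).2]
    _ = K * (C + 1) * ‖Y s - y s‖ + β := by ring
  have hφ : ContinuousOn (fun s => K * (C + 1) * ‖Y s - y s‖ + β) (Icc 0 t) :=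
    ((((hY.1.sub hy.1).norm).const_smul (K * (C + 1) : ℝ)).add continuousOn_const).mono hsub
  have key := norm_integral_sub_rpow_div_smul_sub_le hr ht.1 (Real.Gamma_pos_of_pos hγ)
    (intervalIntegrable_mild_integrand hγ hg.continuous hb hm hY.1 hbm ht)
    (intervalIntegrable_mild_integrand hγ hf ha hℓ hy.1 hC ht) hφ
    fun s hs => hpt s (hsub ⟨hs.1.le, hs.2⟩)
  rw [hY.2 t ht, hy.2 t ht, add_sub_add_left_eq_sub]
  refine key.trans ?_
  have htT : β * (t ^ γ / γ) / Real.Gamma γ ≤ β * T ^ γ / Real.Gamma (γ + 1) := by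
    rw [Real.Gamma_add_one hγ.ne', mul_div_assoc', div_div]
    gcongr
    exacts [ht.1, ht.2]
  rw [integral_sub_rpow_mul_add (w := fun s => ‖Y s - y s‖) hγ ht.1
    ((hY.1.sub hy.1).norm.mono hsub), add_div]
  have : K * (C + 1) * (∫ s in (0:ℝ)..t, (t - s) ^ (γ - 1) * ‖Y s - y s‖) / Real.Gamma γ
      = K * (C + 1) / Real.Gamma γ * ∫ s in (0:ℝ)..t, (t - s) ^ (γ - 1) * ‖Y s - y s‖ := by ring
  linarith

theorem IsMildSolution.norm_sub_le {K : NNReal} {Ky d η lam : ℝ} (hγ : 0 < γ)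
    (hy : IsMildSolution γ T y₀ f a ℓ y) (hY : IsMildSolution γ T y₀ g b m Y)
    (hf : Continuous f) (hg : LipschitzWith K g)
    (ha : Measurable a) (hℓ : Measurable ℓ) (hb : Measurable b) (hm : Measurable m)
    (hC : ∀ s ∈ Icc 0 T, ‖a s‖ ≤ C ∧ ‖ℓ s‖ ≤ C) (hKy : ∀ s ∈ Icc 0 T, ‖y s‖ ≤ Ky)
    (hd1 : d ≤ 1) (hd : ∀ s ∈ Icc 0 T, ‖b s - a s‖ ≤ d ∧ ‖m s - ℓ s‖ ≤ d)
    (hη : ∀ z ∈ Metric.closedBall 0 (C * Ky + C), ‖g z - f z‖ ≤ η)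
    (hlam : 0 < lam) (hKlam : 2 * K * (C + 1) ≤ lam ^ γ) :
    ∀ t ∈ Icc 0 T, ‖Y t - y t‖
      ≤ 2 * ((η + K * d * (Ky + 1)) * T ^ γ / Real.Gamma (γ + 1)) * Real.exp (lam * T) := by
  intro t ht
  have hC0 : 0 ≤ C := (norm_nonneg _).trans (hC t ht).1
  refine le_two_mul_exp_of_le_add_integral hγ (by positivity) hlam ?_ (hY.1.sub hy.1).norm
    (fun _ _ => norm_nonneg _)
    (fun s hs => hy.norm_sub_le_add_integral hγ hY hf hg ha hℓ hb hm hC hKy hd1 hd hη hs) t ht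
  rwa [mul_assoc, div_mul_cancel₀ _ (Real.Gamma_pos_of_pos hγ).ne', ← mul_assoc]

end MildSolution

/-- Let `(f_ε)_{ε>0}` be a family of functions `ℝⁿ → ℝⁿ`, each globally
Lipschitz with the same constant `L > 0`, converging pointwise to `f` as `ε ↓ 0`. If
`(a_ε,ℓ_ε) → (a,ℓ)` in `L^∞(0,T;ℝ^{n×n}×ℝⁿ)` (uniformly on `[0,T]`) as `ε ↓ 0`, and
`y_ε` solves the state equation with data `(f_ε, a_ε, ℓ_ε)` while `y = S(a,ℓ)`, then
`‖y_ε - y‖_{C([0,T];ℝⁿ)} → 0` as `ε ↓ 0`. -/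
theorem stmt_18 {n : ℕ} (γ T L : ℝ) (hγ : γ ∈ Ioo (0:ℝ) 1) (hT : 0 < T) (hL : 0 < L)
    (y₀ : Vec n) (f : Vec n → Vec n)
    (hf : ∀ z₁ z₂ : Vec n, ‖f z₁ - f z₂‖ ≤ L * ‖z₁ - z₂‖)
    (feps : ℝ → Vec n → Vec n)
    (hfepsLip : ∀ ε > (0:ℝ), ∀ z₁ z₂ : Vec n, ‖feps ε z₁ - feps ε z₂‖ ≤ L * ‖z₁ - z₂‖)
    (hfepsconv : ∀ z : Vec n, Tendsto (fun ε : ℝ => feps ε z) (𝓝[>] 0) (𝓝 (f z)))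
    (a : ℝ → Mat n) (ℓ : ℝ → Vec n) (ha : Measurable a) (hℓ : Measurable ℓ)
    (hbd : ∃ C : ℝ, ∀ t ∈ Icc (0:ℝ) T, ‖a t‖ ≤ C ∧ ‖ℓ t‖ ≤ C)
    (aeps : ℝ → ℝ → Mat n) (leps : ℝ → ℝ → Vec n)
    (haeps : ∀ ε > (0:ℝ), Measurable (aeps ε) ∧ Measurable (leps ε) ∧
      ∃ C : ℝ, ∀ t ∈ Icc (0:ℝ) T, ‖aeps ε t‖ ≤ C ∧ ‖leps ε t‖ ≤ C)
    (hconv : ∀ δ > (0:ℝ), ∃ ε₀ > (0:ℝ), ∀ ε ∈ Ioo (0:ℝ) ε₀, ∀ t ∈ Icc (0:ℝ) T,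
      ‖aeps ε t - a t‖ ≤ δ ∧ ‖leps ε t - ℓ t‖ ≤ δ)
    (Y : ℝ → ℝ → Vec n)
    (hY : ∀ ε > (0:ℝ), IsMildSolution γ T y₀ (feps ε) (aeps ε) (leps ε) (Y ε))
    (y : ℝ → Vec n) (hy : IsMildSolution γ T y₀ f a ℓ y) :
    ∀ δ > (0:ℝ), ∃ ε₀ > (0:ℝ), ∀ ε ∈ Ioo (0:ℝ) ε₀, ∀ t ∈ Icc (0:ℝ) T,
      ‖Y ε t - y t‖ ≤ δ := by
  intro δ hδ
  obtain ⟨C, hC⟩ := hbd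
  obtain ⟨Ky, hKy⟩ := isCompact_Icc.exists_bound_of_continuousOn hy.1
  have hC0 : 0 ≤ C := (norm_nonneg _).trans (hC 0 ⟨le_rfl, hT.le⟩).1
  let K : NNReal := ⟨L, hL.le⟩
  have lip {g : Vec n → Vec n} (h : ∀ z₁ z₂, ‖g z₁ - g z₂‖ ≤ L * ‖z₁ - z₂‖) :
      LipschitzWith K g :=
    lipschitzWith_iff_norm_sub_le.2 h
  set lam := (2 * L * (C + 1)) ^ γ⁻¹
  have hlam : 2 * K * (C + 1) ≤ lam ^ γ := (Real.rpow_inv_rpow (by positivity) hγ.1.ne').ge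
  let Φ : ℝ → ℝ := fun θ =>
    2 * ((θ + K * θ * (Ky + 1)) * T ^ γ / Real.Gamma (γ + 1)) * Real.exp (lam * T)
  have hΦ : Tendsto Φ (𝓝[>] 0) (𝓝 0) := by
    simpa [Φ] using ((by fun_prop : Continuous Φ).tendsto 0).mono_left nhdsWithin_le_nhds
  obtain ⟨θ, ⟨hθ, hθ1⟩, hθδ⟩ :=
    (Filter.Eventually.and (Ioo_mem_nhdsGT one_pos) (hΦ.eventually (ge_mem_nhds hδ))).exists
  have hunif : ∀ᶠ ε in 𝓝[>] 0, ∀ z ∈ Metric.closedBall 0 (C * Ky + C), ‖feps ε z - f z‖ ≤ θ := by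
    have := (tendstoLocallyUniformlyOn_iff_tendstoUniformlyOn_of_compact
      (isCompact_closedBall (0 : Vec n) (C * Ky + C))).1
      (tendstoLocallyUniformly_of_lipschitzWith (eventually_nhdsWithin_of_forall fun ε hε =>
        lip (hfepsLip ε hε)) (lip hf) hfepsconv).tendstoLocallyUniformlyOn
    filter_upwards [Metric.tendstoUniformlyOn_iff.1 this θ hθ] with ε hε z hz
    rw [← dist_eq_norm, dist_comm]
    exact (hε z hz).le
  have hdata : ∀ᶠ ε in 𝓝[>] 0, ∀ t ∈ Icc 0 T, ‖aeps ε t - a t‖ ≤ θ ∧ ‖leps ε t - ℓ t‖ ≤ θ := by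
    obtain ⟨ε₀, hε₀, h⟩ := hconv θ hθ
    exact mem_of_superset (Ioo_mem_nhdsGT hε₀) h
  have hmain : ∀ᶠ ε in 𝓝[>] 0, ∀ t ∈ Icc 0 T, ‖Y ε t - y t‖ ≤ δ := by
    filter_upwards [hunif, hdata, self_mem_nhdsWithin] with ε hfε hdε hε t ht
    obtain ⟨haε, hℓε, -⟩ := haeps ε hε
    exact (hy.norm_sub_le hγ.1 (hY ε hε) (lip hf).continuous (lip (hfepsLip ε hε)) ha hℓ haε hℓε
      hC hKy hθ1.le hdε hfε (by positivity) hlam t ht).trans hθδ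
  obtain ⟨ε₀, hε₀, h⟩ := mem_nhdsGT_iff_exists_Ioo_subset.1 hmain
  exact ⟨ε₀, hε₀, fun ε hε => h hε⟩
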